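/- Let Ω(r) = ∑_{n≥0} (1/(n+1))·C(2n,n)²·r^{n+1} as a formal power series over ℚ. Then Ω satisfies the linear differential equation 4·Ω(r) + r·(16r − 1)·Ω''(r) = 0. -/

import Mathlib

open PowerSeries

/-- `Ω(r) = ∑_{n≥0} (1/(n+1))·C(2n,n)²·r^{n+1}`. -/
noncomputable def Omega : PowerSeries ℚ :=
  PowerSeries.mk fun m => if m = 0 then 0 else
    (1 / (m : ℚ)) * ((2 * (m - 1)).choose (m - 1) : ℚ) ^ 2

/-! The coefficient of `rⁿ` in `4Ω + r(16r - 1)Ω''` is `(4 + 16n(n-1)) aₙ - n(n+1) aₙ₊₁`, where `aₙ`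
are the coefficients of `Ω`, and `4 + 16n(n-1) = 4(2n-1)²`. With `aₙ₊₁ = C(2n,n)²/(n+1)` the vanishing
of this coefficient is the square of the central binomial recurrence
`(n+1) C(2n+2,n+1) = 2(2n+1) C(2n,n)`. -/

namespace PowerSeries

variable {R : Type*} [CommRing R]

theorem coeff_derivative_derivative (f : R⟦X⟧) (n : ℕ) :
    coeff n (d⁄dX R (d⁄dX R f)) = coeff (n + 2) f * (n + 2) * (n + 1) := by
  rw [coeff_derivative, coeff_derivative]
  push_cast
  ring

theorem coeff_X_mul_derivative_derivative (f : R⟦X⟧) (n : ℕ) :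
    coeff n (X * d⁄dX R (d⁄dX R f)) = (n + 1) * n * coeff (n + 1) f := by
  cases n with
  | zero => simp
  | succ n =>
    rw [coeff_succ_X_mul, coeff_derivative_derivative]
    push_cast
    ring

theorem coeff_X_sq_mul_derivative_derivative (f : R⟦X⟧) (n : ℕ) :
    coeff n (X ^ 2 * d⁄dX R (d⁄dX R f)) = n * (n - 1) * coeff n f := by
  rcases n with _ | _ | n
  · simp
  · simp [coeff_X_pow_mul']
  · rw [coeff_X_pow_mul', if_pos (by omega), show n + 1 + 1 - 2 = n by omega,
      coeff_derivative_derivative]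
    push_cast
    ring

end PowerSeries

theorem coeff_Omega_zero : coeff 0 Omega = 0 := by
  simp [Omega]

theorem coeff_Omega_succ (n : ℕ) :
    coeff (n + 1) Omega = (n.centralBinom : ℚ) ^ 2 / (n + 1) := by
  simp [Omega, Nat.centralBinom_eq_two_mul_choose, div_eq_inv_mul]

theorem coeff_Omega_recurrence (n : ℕ) :
    (n + 1) * (n + 2) * coeff (n + 2) Omega = 4 * (2 * n + 1) ^ 2 * coeff (n + 1) Omega := by
  have hrec : ((n + 1) * (n + 1).centralBinom : ℚ) = 2 * (2 * n + 1) * n.centralBinom := by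
    exact_mod_cast Nat.succ_mul_centralBinom_succ n
  rw [coeff_Omega_succ, coeff_Omega_succ]
  field_simp
  push_cast
  linear_combination
    (n + 2) * ((n + 1) * (n + 1).centralBinom + 2 * (2 * n + 1) * n.centralBinom : ℚ) * hrec

theorem omega_ode : 4 * Omega
    + PowerSeries.X * (16 * PowerSeries.X - 1) * (d⁄dX ℚ) ((d⁄dX ℚ) Omega) = 0 := by
  have hsplit : 4 * Omega + X * (16 * X - 1) * d⁄dX ℚ (d⁄dX ℚ Omega) =
      C 4 * Omega + C 16 * (X ^ 2 * d⁄dX ℚ (d⁄dX ℚ Omega)) - X * d⁄dX ℚ (d⁄dX ℚ Omega) := by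
    rw [map_ofNat, map_ofNat]; ring
  ext n
  rw [hsplit, map_sub, map_add, coeff_C_mul, coeff_C_mul, coeff_X_sq_mul_derivative_derivative,
    coeff_X_mul_derivative_derivative, map_zero]
  cases n with
  | zero => simp [coeff_Omega_zero]
  | succ n =>
    push_cast
    linear_combination -(coeff_Omega_recurrence n)
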